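/- arXiv:2106.06128 — 2 statements merged into one kernel-verified Lean document; each statement's English description precedes it below -/
import Mathlib

section
/- Under the grounded Laplacian setup, for any two followers i, j ∈ F: 𝟏ᵀ(L_F + E_ii + E_jj)^{-1}(b + e_i + e_j) − 𝟏ᵀ(L_F + E_ii)^{-1}(b + e_i) ≤ 𝟏ᵀ(L_F + E_jj)^{-1}(b + e_j) − 𝟏ᵀL_F^{-1}b. (That is, for two added edges e₁ incident to follower i and e₂ incident to follower j, H({e₁,e₂}) − H({e₁}) ≤ H({e₂}) − H(∅).) -/
/-! Write `M_S = L_F + ∑_{k ∈ S} E_kk`. Since `(L_F 𝟏)_k` counts all neighbours of `k` outside `F`,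
`r = L_F 𝟏 - b ≥ 0` and `M_S 𝟏 = b + e_S + r`, so `𝟏ᵀ M_S⁻¹ (b + e_S) = |F| - 𝟏ᵀ M_S⁻¹ r`, and the
claim says that `S ↦ 𝟏ᵀ M_S⁻¹ r` has a nonnegative second difference. Applying
`A⁻¹ - B⁻¹ = A⁻¹ (B - A) B⁻¹` twice,
`M_∅⁻¹ - M_i⁻¹ - M_j⁻¹ + M_ij⁻¹ = M_∅⁻¹ E_jj M_j⁻¹ E_ii M_i⁻¹ + M_j⁻¹ E_ii M_i⁻¹ E_jj M_ij⁻¹`,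
and every factor maps nonnegative vectors to nonnegative vectors: the `M_S` are positive definite
Z-matrices, whose inverses are nonnegative by the minimum principle. -/

open Matrix Finset

namespace Matrix

variable {m n α : Type*}

theorem diagonal_mulVec_one [Fintype n] [DecidableEq n] [NonAssocSemiring α]
    (d : n → α) : diagonal d *ᵥ 1 = d :=
  funext fun k => by rw [mulVec_diagonal, Pi.one_apply, mul_one]

theorem inv_mulVec_eq_one_sub [Fintype n] [DecidableEq n] [CommRing α] {N : Matrix n n α}
    (hN : IsUnit N) {c r : n → α} (h : N *ᵥ 1 = c + r) : N⁻¹ *ᵥ c = 1 - N⁻¹ *ᵥ r := by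
  rw [eq_sub_of_add_eq h.symm, mulVec_sub, mulVec_mulVec,
    nonsing_inv_mul _ ((isUnit_iff_isUnit_det N).1 hN), one_mulVec]

theorem inv_second_difference [Fintype n] [DecidableEq n] [CommRing α] {M D₁ D₂ : Matrix n n α}
    (h : IsUnit M) (h₁ : IsUnit (M + D₁)) (h₂ : IsUnit (M + D₂)) (h₁₂ : IsUnit (M + D₁ + D₂)) :
    M⁻¹ - (M + D₁)⁻¹ - ((M + D₂)⁻¹ - (M + D₁ + D₂)⁻¹) =
      M⁻¹ * D₂ * (M + D₂)⁻¹ * D₁ * (M + D₁)⁻¹ +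
        (M + D₂)⁻¹ * D₁ * (M + D₁)⁻¹ * D₂ * (M + D₁ + D₂)⁻¹ := by
  have hsub : ∀ {A B : Matrix n n α}, IsUnit A → IsUnit B → A⁻¹ - B⁻¹ = A⁻¹ * (B - A) * B⁻¹ :=
    fun hA hB => inv_sub_inv (iff_of_true hA hB)
  rw [hsub h h₁, hsub h₂ h₁₂,
    show M + D₁ + D₂ - (M + D₂) = D₁ by abel, add_sub_cancel_left,
    show M⁻¹ * D₁ * (M + D₁)⁻¹ - (M + D₂)⁻¹ * D₁ * (M + D₁ + D₂)⁻¹ =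
      (M⁻¹ - (M + D₂)⁻¹) * D₁ * (M + D₁)⁻¹ + (M + D₂)⁻¹ * D₁ * ((M + D₁)⁻¹ - (M + D₁ + D₂)⁻¹) by
        noncomm_ring,
    hsub h h₂, hsub h₁ h₁₂, add_sub_cancel_left, show M + D₁ + D₂ - (M + D₁) = D₂ by abel]
  simp only [Matrix.mul_assoc]

def IsZMatrix [Zero α] [LE α] (M : Matrix n n α) : Prop :=
  ∀ k l, k ≠ l → M k l ≤ 0

theorem IsZMatrix.submatrix [Zero α] [LE α] {M : Matrix n n α} (hM : M.IsZMatrix) {f : m → n}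
    (hf : Function.Injective f) : (M.submatrix f f).IsZMatrix :=
  fun _ _ h => hM _ _ (hf.ne h)

theorem IsZMatrix.add_diagonal [DecidableEq n] [AddZeroClass α] [LE α] {M : Matrix n n α}
    (hM : M.IsZMatrix) (d : n → α) : (M + diagonal d).IsZMatrix := fun k l h => by
  simpa [diagonal_apply_ne _ h] using hM k l h

theorem PosDef.add_diagonal [DecidableEq n] {M : Matrix n n ℝ} (hPD : M.PosDef) {d : n → ℝ}
    (hd : 0 ≤ d) : (M + diagonal d).PosDef :=
  hPD.add_posSemidef (posSemidef_diagonal_iff.2 hd)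

variable [Fintype n] {M : Matrix n n ℝ}

theorem IsZMatrix.dotProduct_mulVec_nonpos (hM : M.IsZMatrix) {y z : n → ℝ} (hy : 0 ≤ y)
    (hz : 0 ≤ z) (hyz : ∀ k, y k * z k = 0) : y ⬝ᵥ (M *ᵥ z) ≤ 0 := by
  simp only [dotProduct, mulVec, Finset.mul_sum]
  refine Finset.sum_nonpos fun k _ => Finset.sum_nonpos fun l _ => ?_
  rcases eq_or_ne k l with rfl | hkl
  · rw [mul_left_comm, hyz k, mul_zero]
  · rw [mul_left_comm]
    exact mul_nonpos_of_nonpos_of_nonneg (hM k l hkl) (mul_nonneg (hy k) (hz l))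

/-- The minimum principle: `x⁻ᵀ M x⁻ = x⁻ᵀ M x⁺ - x⁻ᵀ M x ≤ 0`, so positive definiteness
forces `x⁻ = 0`. -/
theorem IsZMatrix.nonneg_of_mulVec_nonneg (hM : M.IsZMatrix) (hPD : M.PosDef) {x : n → ℝ}
    (hx : 0 ≤ M *ᵥ x) : 0 ≤ x := by
  have hsplit : x⁻ ⬝ᵥ (M *ᵥ x⁻) = x⁻ ⬝ᵥ (M *ᵥ x⁺) - x⁻ ⬝ᵥ (M *ᵥ x) := by
    rw [← dotProduct_sub, ← mulVec_sub, show x⁺ - x = x⁻ by nth_rw 2 [← posPart_sub_negPart x]; abel]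
  have hcross : x⁻ ⬝ᵥ (M *ᵥ x⁺) ≤ 0 := by
    refine hM.dotProduct_mulVec_nonpos (negPart_nonneg x) (posPart_nonneg x) fun k => ?_
    rcases le_total (x k) 0 with h | h
    · simp [posPart_eq_zero.2 h]
    · simp [negPart_eq_zero.2 h]
  have hneg : x⁻ = 0 := by
    by_contra hne
    have hpos := hPD.dotProduct_mulVec_pos hne
    rw [star_trivial] at hpos
    linarith [dotProduct_nonneg_of_nonneg (negPart_nonneg x) hx]
  exact negPart_eq_zero.1 hneg

variable [DecidableEq n]

theorem diagonal_mulVec_nonneg {d y : n → ℝ} (hd : 0 ≤ d) (hy : 0 ≤ y) :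
    0 ≤ diagonal d *ᵥ y := fun k => by
  rw [mulVec_diagonal]
  exact mul_nonneg (hd k) (hy k)

theorem IsZMatrix.inv_mulVec_nonneg (hM : M.IsZMatrix) (hPD : M.PosDef) {y : n → ℝ}
    (hy : 0 ≤ y) : 0 ≤ M⁻¹ *ᵥ y := by
  refine hM.nonneg_of_mulVec_nonneg hPD ?_
  rwa [mulVec_mulVec, mul_nonsing_inv _ ((isUnit_iff_isUnit_det M).1 hPD.isUnit), one_mulVec]

theorem IsZMatrix.inv_second_difference_mulVec_nonneg (hM : M.IsZMatrix) (hPD : M.PosDef)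
    {d₁ d₂ r : n → ℝ} (hd₁ : 0 ≤ d₁) (hd₂ : 0 ≤ d₂) (hr : 0 ≤ r) :
    0 ≤ (M⁻¹ - (M + diagonal d₁)⁻¹ - ((M + diagonal d₂)⁻¹ - (M + diagonal d₁ + diagonal d₂)⁻¹))
      *ᵥ r := by
  have hPD₁ := hPD.add_diagonal hd₁
  have hPD₂ := hPD.add_diagonal hd₂
  have hPD₁₂ := hPD₁.add_diagonal hd₂
  have hZ₁ := hM.add_diagonal d₁
  have hZ₂ := hM.add_diagonal d₂
  have hZ₁₂ := hZ₁.add_diagonal d₂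
  rw [inv_second_difference hPD.isUnit hPD₁.isUnit hPD₂.isUnit hPD₁₂.isUnit, add_mulVec]
  simp only [← mulVec_mulVec]
  exact add_nonneg
    (hM.inv_mulVec_nonneg hPD <| diagonal_mulVec_nonneg hd₂ <| hZ₂.inv_mulVec_nonneg hPD₂ <|
      diagonal_mulVec_nonneg hd₁ <| hZ₁.inv_mulVec_nonneg hPD₁ hr)
    (hZ₂.inv_mulVec_nonneg hPD₂ <| diagonal_mulVec_nonneg hd₁ <| hZ₁.inv_mulVec_nonneg hPD₁ <|
      diagonal_mulVec_nonneg hd₂ <| hZ₁₂.inv_mulVec_nonneg hPD₁₂ hr)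

end Matrix

namespace SimpleGraph

variable {V R : Type*} [Fintype V] [DecidableEq V] (G : SimpleGraph V) [DecidableRel G.Adj]

theorem lapMatrix_apply_of_ne [AddGroupWithOne R] {v w : V} (h : v ≠ w) :
    G.lapMatrix R v w = -G.adjMatrix R v w := by
  simp [lapMatrix, degMatrix, diagonal_apply_ne _ h]

theorem isZMatrix_lapMatrix [Ring R] [PartialOrder R] [IsOrderedRing R] :
    (G.lapMatrix R).IsZMatrix := fun v w h => by
  rw [G.lapMatrix_apply_of_ne h, neg_nonpos, adjMatrix_apply]
  split_ifs <;> norm_num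

theorem lapMatrix_submatrix_mulVec_one [Ring R] (F : Finset V) (k : F) :
    ((G.lapMatrix R).submatrix (fun i : F => (i : V)) (fun i : F => (i : V)) *ᵥ 1) k =
      #{w ∈ Fᶜ | G.Adj k w} := by
  have hrow : ∑ w, G.lapMatrix R k w = 0 := by
    simpa [mulVec, dotProduct] using congrFun (G.lapMatrix_mulVec_const_eq_zero (R := R)) k
  have hout : ∑ w ∈ Fᶜ, G.lapMatrix R k w = -#{w ∈ Fᶜ | G.Adj k w} := by
    rw [← Finset.sum_boole, ← Finset.sum_neg_distrib]
    refine Finset.sum_congr rfl fun w hw => ?_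
    rw [G.lapMatrix_apply_of_ne (ne_of_mem_of_not_mem k.2 (Finset.mem_compl.1 hw)), adjMatrix_apply]
  have hsplit := Finset.sum_add_sum_compl F fun w => G.lapMatrix R k w
  rw [hrow, hout] at hsplit
  simp only [mulVec, dotProduct, submatrix_apply, Pi.one_apply, mul_one]
  rw [Finset.sum_coe_sort F fun w => G.lapMatrix R k w]
  exact add_neg_eq_zero.1 hsplit

theorem card_adj_le_lapMatrix_submatrix_mulVec_one [Ring R] [PartialOrder R] [IsOrderedRing R]
    {F S : Finset V} (hFS : Disjoint F S) (k : F) :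
    (#{a ∈ S | G.Adj a k} : R) ≤
      ((G.lapMatrix R).submatrix (fun i : F => (i : V)) (fun i : F => (i : V)) *ᵥ 1) k := by
  rw [G.lapMatrix_submatrix_mulVec_one]
  refine Nat.mono_cast (Finset.card_le_card fun w hw => ?_)
  simp only [Finset.mem_filter, Finset.mem_compl] at hw ⊢
  exact ⟨Finset.disjoint_right.1 hFS hw.1, hw.2.symm⟩

end SimpleGraph

theorem stmt5_general {V : Type} [Fintype V] [DecidableEq V]
    (G : SimpleGraph V) [DecidableRel G.Adj]
    (F S1 : Finset V)
    (hFS1 : Disjoint F S1)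
    (LF : Matrix F F ℝ)
    (hLF : LF = (G.lapMatrix ℝ).submatrix (fun i : F => (i : V)) (fun i : F => (i : V)))
    (hPD : LF.PosDef)
    (b : F → ℝ)
    (hb : ∀ i : F, b i = ((S1.filter fun a => G.Adj a (i : V)).card : ℝ))
    (i j : F) :
    (1 : F → ℝ) ⬝ᵥ ((LF + vecMulVec (Pi.single i 1) (Pi.single i 1)
          + vecMulVec (Pi.single j 1) (Pi.single j 1))⁻¹
        *ᵥ (b + Pi.single i 1 + Pi.single j 1))
      - (1 : F → ℝ) ⬝ᵥ ((LF + vecMulVec (Pi.single i 1) (Pi.single i 1))⁻¹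
        *ᵥ (b + Pi.single i 1))
    ≤ (1 : F → ℝ) ⬝ᵥ ((LF + vecMulVec (Pi.single j 1) (Pi.single j 1))⁻¹
        *ᵥ (b + Pi.single j 1))
      - (1 : F → ℝ) ⬝ᵥ (LF⁻¹ *ᵥ b) := by
  have hZ : LF.IsZMatrix := hLF ▸ G.isZMatrix_lapMatrix.submatrix Subtype.val_injective
  set r := LF *ᵥ 1 - b
  have hr : 0 ≤ r := fun k => by
    change 0 ≤ (LF *ᵥ 1) k - b k
    rw [sub_nonneg, hLF, hb]
    exact G.card_adj_le_lapMatrix_submatrix_mulVec_one hFS1 k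
  have hei : 0 ≤ (Pi.single i 1 : F → ℝ) := Pi.single_nonneg.2 zero_le_one
  have hej : 0 ≤ (Pi.single j 1 : F → ℝ) := Pi.single_nonneg.2 zero_le_one
  have hrow : LF *ᵥ 1 = b + r := (add_sub_cancel b _).symm
  have hrowi : (LF + diagonal (Pi.single i 1)) *ᵥ 1 = b + Pi.single i 1 + r := by
    rw [add_mulVec, hrow, diagonal_mulVec_one]; abel
  have hrowj : (LF + diagonal (Pi.single j 1)) *ᵥ 1 = b + Pi.single j 1 + r := by
    rw [add_mulVec, hrow, diagonal_mulVec_one]; abel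
  have hrowij : (LF + diagonal (Pi.single i 1) + diagonal (Pi.single j 1)) *ᵥ 1 =
      b + Pi.single i 1 + Pi.single j 1 + r := by
    rw [add_mulVec, hrowi, diagonal_mulVec_one]; abel
  have hsecond := dotProduct_nonneg_of_nonneg (zero_le_one' (F → ℝ))
    (hZ.inv_second_difference_mulVec_nonneg hPD hei hej hr)
  simp only [← single_eq_single_vecMulVec_single, ← diagonal_single]
  rw [inv_mulVec_eq_one_sub ((hPD.add_diagonal hei).add_diagonal hej).isUnit hrowij,
    inv_mulVec_eq_one_sub (hPD.add_diagonal hei).isUnit hrowi,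
    inv_mulVec_eq_one_sub (hPD.add_diagonal hej).isUnit hrowj,
    inv_mulVec_eq_one_sub hPD.isUnit hrow]
  simp only [sub_mulVec, dotProduct_sub] at hsecond ⊢
  linarith

/-- Under the grounded Laplacian setup, for any two followers `i, j ∈ F`:
`𝟏ᵀ(L_F + E_ii + E_jj)⁻¹(b + eᵢ + eⱼ) − 𝟏ᵀ(L_F + E_ii)⁻¹(b + eᵢ)
  ≤ 𝟏ᵀ(L_F + E_jj)⁻¹(b + eⱼ) − 𝟏ᵀ L_F⁻¹ b`,
i.e. for two added edges `e₁` incident to follower `i` and `e₂` incident to follower `j`,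
`H({e₁,e₂}) − H({e₁}) ≤ H({e₂}) − H(∅)`. -/
theorem stmt5 {V : Type} [Fintype V] [DecidableEq V]
    (G : SimpleGraph V) [DecidableRel G.Adj] (hconn : G.Connected)
    (F S0 S1 : Finset V)
    (hFne : F.Nonempty) (hS1ne : S1.Nonempty)
    (hFS0 : Disjoint F S0) (hFS1 : Disjoint F S1) (hS0S1 : Disjoint S0 S1)
    (hcover : F ∪ S0 ∪ S1 = Finset.univ)
    (LF : Matrix F F ℝ)
    (hLF : LF = (G.lapMatrix ℝ).submatrix (fun i : F => (i : V)) (fun i : F => (i : V)))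
    (hPD : LF.PosDef) (hnn : ∀ i j : F, 0 ≤ LF⁻¹ i j)
    (b : F → ℝ)
    (hb : ∀ i : F, b i = ((S1.filter fun a => G.Adj a (i : V)).card : ℝ))
    (i j : F) :
    (1 : F → ℝ) ⬝ᵥ ((LF + vecMulVec (Pi.single i 1) (Pi.single i 1)
          + vecMulVec (Pi.single j 1) (Pi.single j 1))⁻¹
        *ᵥ (b + Pi.single i 1 + Pi.single j 1))
      - (1 : F → ℝ) ⬝ᵥ ((LF + vecMulVec (Pi.single i 1) (Pi.single i 1))⁻¹
        *ᵥ (b + Pi.single i 1))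
    ≤ (1 : F → ℝ) ⬝ᵥ ((LF + vecMulVec (Pi.single j 1) (Pi.single j 1))⁻¹
        *ᵥ (b + Pi.single j 1))
      - (1 : F → ℝ) ⬝ᵥ (LF⁻¹ *ᵥ b) :=
  stmt5_general G F S1 hFS1 LF hLF hPD b hb i j
end

section
/- Under the grounded Laplacian setup with n ≥ 2, let 0 < ε < 1/2, let t be a positive integer, and let 0 < δ < (ε/(72n²))·√(6(1−ε/12)/((1+ε/12)(n²−1))). Let X and Y be real matrices with columns indexed by F such that ‖X e_i‖² + ‖Y e_i‖² = e_iᵀ L_F^{-1} e_i for every i ∈ F, and let X', Y', X̃, Ỹ be real t×|F| matrices satisfying: (i) (1−ε/12)‖X e_i‖² ≤ ‖X' e_i‖² ≤ (1+ε/12)‖X e_i‖² and (1−ε/12)‖Y e_i‖² ≤ ‖Y' e_i‖² ≤ (1+ε/12)‖Y e_i‖² for every i ∈ F; and (ii) ‖X'_{[j,:]} − X̃_{[j,:]}‖_{L_F} ≤ δ‖X'_{[j,:]}‖_{L_F} and ‖Y'_{[j,:]} − Ỹ_{[j,:]}‖_{L_F} ≤ δ‖Y'_{[j,:]}‖_{L_F}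 for every row index 1 ≤ j ≤ t. Then for every i ∈ F: (1 − ε/3)·e_iᵀ L_F^{-1} e_i ≤ ‖X̃ e_i‖² + ‖Ỹ e_i‖² ≤ (1 + ε/3)·e_iᵀ L_F^{-1} e_i. -/
/-!
Write `R i = (L_F⁻¹)ᵢᵢ`. By Cauchy–Schwarz for the inner product defined by `L_F`, every
coordinate satisfies `xᵢ² ≤ R i · xᵀ L_F x`, so row-wise `L_F`-errors of size `δ` add up to the
column error `∑ⱼ (X̃ - X')ⱼᵢ² ≤ R i · δ² · ∑ⱼ X'ⱼᵀ L_F X'ⱼ`. The graph supplies two crude bounds: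
`xᵀ L_F x ≤ n ‖x‖²`, and, telescoping `x` along a path from `i` to a leader (where the extension
of `x` by zero vanishes), `xᵢ² ≤ 2n · xᵀ L_F x`, i.e. `R i ≤ 2n`. Hence `X'` and `Y'` have total
mass at most `2n²(1 + ε/12)`, and the choice of `δ` makes the column error at most
`(ε/36)² R i`. A perturbation of that size moves a squared norm lying within `ε/12` of `R i` by
less than the remaining margin.
-/

open Matrix Finset Function

namespace Matrix

variable {m : Type*} [Fintype m] {M : Matrix m m ℝ}

lemma PosDef.dotProduct_mulVec_self_nonneg (hM : M.PosDef) (x : m → ℝ) :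
    0 ≤ x ⬝ᵥ (M *ᵥ x) := by
  simpa using hM.posSemidef.dotProduct_mulVec_nonneg x

variable [DecidableEq m]

lemma mulVec_single_one_apply (N : Matrix m m ℝ) (i : m) : (N *ᵥ Pi.single i 1) i = N i i := by
  simp only [mulVec_single, MulOpposite.op_one, Pi.smul_apply, col_apply, one_smul]

lemma PosDef.mulVec_inv_mulVec (hM : M.PosDef) (v : m → ℝ) : M *ᵥ (M⁻¹ *ᵥ v) = v := by
  rw [mulVec_mulVec, mul_nonsing_inv _ ((isUnit_iff_isUnit_det M).mp hM.isUnit), one_mulVec]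

lemma PosDef.sq_apply_le_inv_apply_mul (hM : M.PosDef) (x : m → ℝ) (i : m) :
    x i ^ 2 ≤ M⁻¹ i i * (x ⬝ᵥ (M *ᵥ x)) := by
  set w := M⁻¹ *ᵥ Pi.single i 1
  have hsymm : ∀ y, w ⬝ᵥ (M *ᵥ y) = y ⬝ᵥ (M *ᵥ w) := fun y => by
    rw [dotProduct_mulVec, ← mulVec_transpose, ← conjTranspose_eq_transpose_of_trivial,
      hM.isHermitian.eq, dotProduct_comm]
  have hxw : x ⬝ᵥ (M *ᵥ w) = x i := by rw [hM.mulVec_inv_mulVec, dotProduct_single, mul_one]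
  have hww : w ⬝ᵥ (M *ᵥ w) = M⁻¹ i i := by
    rw [hM.mulVec_inv_mulVec, dotProduct_single, mul_one]
    exact mulVec_single_one_apply _ _
  have := LinearMap.BilinForm.apply_mul_apply_le_of_forall_zero_le (toLinearMap₂' ℝ M)
    (fun y => by simpa [toLinearMap₂'_apply'] using hM.dotProduct_mulVec_self_nonneg y) x w
  simp only [toLinearMap₂'_apply', hsymm, hxw, hww] at this
  linarith

lemma PosDef.inv_apply_le_of_forall_sq_apply_le (hM : M.PosDef) {C : ℝ} {i : m}
    (h : ∀ x : m → ℝ, x i ^ 2 ≤ C * (x ⬝ᵥ (M *ᵥ x))) : M⁻¹ i i ≤ C := by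
  have hpos : 0 < M⁻¹ i i := hM.inv.diag_pos
  have := h (M⁻¹ *ᵥ Pi.single i 1)
  rw [hM.mulVec_inv_mulVec, dotProduct_single, mul_one, mulVec_single_one_apply] at this
  nlinarith

lemma PosDef.sum_sq_sub_apply_le {ι : Type*} [Fintype ι] (hM : M.PosDef) {C : ℝ}
    (hC : ∀ x, x ⬝ᵥ (M *ᵥ x) ≤ C * ∑ k, x k ^ 2) {A B : Matrix ι m ℝ} {δ : ℝ}
    (h : ∀ j, √((A j - B j) ⬝ᵥ (M *ᵥ (A j - B j))) ≤ δ * √(A j ⬝ᵥ (M *ᵥ A j))) (i : m) :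
    ∑ j, (B j i - A j i) ^ 2 ≤ M⁻¹ i i * δ ^ 2 * C * ∑ k, ∑ j, A j k ^ 2 := by
  have hrow (j : ι) : (B j i - A j i) ^ 2 ≤ M⁻¹ i i * δ ^ 2 * (A j ⬝ᵥ (M *ᵥ A j)) := by
    have hsq := pow_le_pow_left₀ (Real.sqrt_nonneg _) (h j) 2
    rw [Real.sq_sqrt (hM.dotProduct_mulVec_self_nonneg _), mul_pow,
      Real.sq_sqrt (hM.dotProduct_mulVec_self_nonneg _)] at hsq
    calc (B j i - A j i) ^ 2 = (A j - B j) i ^ 2 := by simp only [Pi.sub_apply]; ring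
      _ ≤ M⁻¹ i i * ((A j - B j) ⬝ᵥ (M *ᵥ (A j - B j))) := hM.sq_apply_le_inv_apply_mul _ i
      _ ≤ M⁻¹ i i * δ ^ 2 * (A j ⬝ᵥ (M *ᵥ A j)) := by
        rw [mul_assoc]; exact mul_le_mul_of_nonneg_left hsq hM.inv.diag_pos.le
  have hcoef : 0 ≤ M⁻¹ i i * δ ^ 2 := mul_nonneg hM.inv.diag_pos.le (sq_nonneg δ)
  calc ∑ j, (B j i - A j i) ^ 2 ≤ ∑ j, M⁻¹ i i * δ ^ 2 * (A j ⬝ᵥ (M *ᵥ A j)) :=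
        sum_le_sum fun j _ => hrow j
    _ ≤ ∑ j, M⁻¹ i i * δ ^ 2 * (C * ∑ k, A j k ^ 2) :=
        sum_le_sum fun j _ => mul_le_mul_of_nonneg_left (hC _) hcoef
    _ = M⁻¹ i i * δ ^ 2 * C * ∑ k, ∑ j, A j k ^ 2 := by
        rw [sum_comm, mul_sum]; exact sum_congr rfl fun j _ => by ring

end Matrix

lemma Matrix.dotProduct_submatrix_mulVec_self {m n R : Type*} [Fintype m] [Fintype n]
    [NonUnitalNonAssocSemiring R] (A : Matrix n n R) {e : m → n} (he : Injective e)
    (x : m → R) :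
    x ⬝ᵥ (A.submatrix e e *ᵥ x) = extend e x 0 ⬝ᵥ (A *ᵥ extend e x 0) := by
  have hzero : ∀ v ∉ Set.range e, extend e x 0 v = 0 := fun v hv => extend_apply' _ _ _ hv
  simp only [dotProduct, mulVec, submatrix_apply]
  refine Fintype.sum_of_injective e he _ _ (fun v hv => by rw [hzero v hv, zero_mul]) fun a => ?_
  rw [he.extend_apply]
  congr 1
  exact Fintype.sum_of_injective e he _ _ (fun v hv => by rw [hzero v hv, mul_zero])
    fun b => by rw [he.extend_apply]

namespace SimpleGraph

variable {V : Type*} {G : SimpleGraph V}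

lemma Walk.sq_sub_le_length_mul_sum_darts (x : V → ℝ) {u v : V} (p : G.Walk u v) :
    (x u - x v) ^ 2 ≤ p.length * (p.darts.map fun d => (x d.fst - x d.snd) ^ 2).sum := by
  induction p with
  | nil => simp
  | @cons a b c _ p ih =>
    simp only [darts_cons, List.map_cons, List.sum_cons, length_cons, Nat.cast_succ]
    set S := (p.darts.map fun d => (x d.fst - x d.snd) ^ 2).sum
    have hS : 0 ≤ S := List.sum_nonneg fun r hr => by
      obtain ⟨d, -, rfl⟩ := List.mem_map.mp hr; positivity
    set α := x a - x b
    set β := x b - x c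
    -- `2αβ ≤ Lα² + S` because `(2αβ)² ≤ 4α²·LS ≤ (Lα² + S)²`
    have h : (2 * α * β) ^ 2 ≤ (p.length * α ^ 2 + S) ^ 2 := by
      nlinarith [sq_nonneg (p.length * α ^ 2 - S), mul_le_mul_of_nonneg_left ih (sq_nonneg α)]
    have hαβ : x a - x c = α + β := by ring
    rw [hαβ]
    nlinarith [(abs_le_of_sq_le_sq' h (by positivity)).2]

variable [Fintype V] [DecidableEq V] [DecidableRel G.Adj]

lemma Walk.IsPath.sum_darts_le {u v : V} {p : G.Walk u v} (hp : p.IsPath) {g : V → V → ℝ}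
    (hg : ∀ a b, 0 ≤ g a b) :
    (p.darts.map fun d => g d.fst d.snd).sum ≤ ∑ a, ∑ b, if G.Adj a b then g a b else 0 := by
  have hnodup : (p.darts.map Dart.toProd).Nodup :=
    (darts_nodup_of_support_nodup hp.support_nodup).map Dart.toProd_injective
  have hsub : (p.darts.map Dart.toProd).toFinset ⊆ univ.filter fun q : V × V => G.Adj q.1 q.2 :=
    fun q hq => by
      obtain ⟨d, -, rfl⟩ := List.mem_map.mp (List.mem_toFinset.mp hq)
      simp [d.adj]
  calc (p.darts.map fun d => g d.fst d.snd).sum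
      = ∑ q ∈ (p.darts.map Dart.toProd).toFinset, g q.1 q.2 := by
        rw [List.sum_toFinset _ hnodup, List.map_map]; rfl
    _ ≤ ∑ q ∈ univ.filter fun q : V × V => G.Adj q.1 q.2, g q.1 q.2 :=
        sum_le_sum_of_subset_of_nonneg hsub fun q _ _ => hg q.1 q.2
    _ = ∑ a, ∑ b, if G.Adj a b then g a b else 0 := by
        rw [sum_filter, ← univ_product_univ, sum_product]

variable (G)

lemma dotProduct_lapMatrix_mulVec (x : V → ℝ) :
    x ⬝ᵥ (G.lapMatrix ℝ *ᵥ x) = (∑ a, ∑ b, if G.Adj a b then (x a - x b) ^ 2 else 0) / 2 := by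
  rw [← toLinearMap₂'_apply', lapMatrix_toLinearMap₂']

lemma dotProduct_lapMatrix_mulVec_le (x : V → ℝ) :
    x ⬝ᵥ (G.lapMatrix ℝ *ᵥ x) ≤ Fintype.card V * ∑ v, x v ^ 2 := by
  have hall : ∑ a, ∑ b, (x a - x b) ^ 2 = 2 * (Fintype.card V * ∑ v, x v ^ 2 - (∑ v, x v) ^ 2) := by
    simp only [sub_sq, sum_add_distrib, sum_sub_distrib, sum_const, card_univ, nsmul_eq_mul,
      ← mul_sum, ← sum_mul, mul_assoc]
    ring
  have hadj : (∑ a, ∑ b, if G.Adj a b then (x a - x b) ^ 2 else 0) ≤ ∑ a, ∑ b, (x a - x b) ^ 2 :=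
    sum_le_sum fun a _ => sum_le_sum fun b _ => by split_ifs; exacts [le_rfl, sq_nonneg _]
  rw [dotProduct_lapMatrix_mulVec]
  nlinarith [sq_nonneg (∑ v, x v)]

variable {G} in
lemma Connected.sq_sub_le (hG : G.Connected) (x : V → ℝ) (u v : V) :
    (x u - x v) ^ 2 ≤ 2 * Fintype.card V * (x ⬝ᵥ (G.lapMatrix ℝ *ᵥ x)) := by
  obtain ⟨p, hp⟩ := (hG.preconnected u v).exists_isPath
  have hlen : (p.length : ℝ) ≤ Fintype.card V := by exact_mod_cast hp.length_lt.le
  have hdarts := hp.sum_darts_le (g := fun a b => (x a - x b) ^ 2) fun _ _ => sq_nonneg _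
  have hS : 0 ≤ (p.darts.map fun d => (x d.fst - x d.snd) ^ 2).sum := List.sum_nonneg fun r hr => by
    obtain ⟨d, -, rfl⟩ := List.mem_map.mp hr; positivity
  rw [dotProduct_lapMatrix_mulVec]
  calc (x u - x v) ^ 2 ≤ p.length * (p.darts.map fun d => (x d.fst - x d.snd) ^ 2).sum :=
        p.sq_sub_le_length_mul_sum_darts x
    _ ≤ Fintype.card V * ∑ a, ∑ b, if G.Adj a b then (x a - x b) ^ 2 else 0 :=
        mul_le_mul hlen hdarts hS (Nat.cast_nonneg _)
    _ = _ := by ring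

variable {G} {F : Finset V}

lemma dotProduct_lapMatrix_submatrix_mulVec_le (x : F → ℝ) :
    x ⬝ᵥ ((G.lapMatrix ℝ).submatrix (↑) (↑) *ᵥ x) ≤ Fintype.card V * ∑ i, x i ^ 2 := by
  rw [dotProduct_submatrix_mulVec_self _ Subtype.val_injective]
  refine (G.dotProduct_lapMatrix_mulVec_le _).trans_eq ?_
  congr 1
  refine (Fintype.sum_of_injective _ Subtype.val_injective _ _ (fun v hv => ?_) fun i => ?_).symm
  · rw [extend_apply' _ _ _ hv, Pi.zero_apply, sq, zero_mul]
  · rw [Subtype.val_injective.extend_apply]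

lemma Connected.sq_apply_le_lapMatrix_submatrix (hG : G.Connected) {s : V} (hs : s ∉ F)
    (x : F → ℝ) (i : F) :
    x i ^ 2 ≤ 2 * Fintype.card V * (x ⬝ᵥ ((G.lapMatrix ℝ).submatrix (↑) (↑) *ᵥ x)) := by
  rw [dotProduct_submatrix_mulVec_self _ Subtype.val_injective]
  have := hG.sq_sub_le (extend Subtype.val x 0) i s
  rwa [Subtype.val_injective.extend_apply, extend_apply' _ _ _ (by simpa using hs), Pi.zero_apply,
    sub_zero] at this

end SimpleGraph

lemma abs_sum_sq_sub_sum_sq_le {ι : Type*} [Fintype ι] (a b : ι → ℝ) {τ : ℝ} (hτ : 0 < τ) :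
    |∑ j, b j ^ 2 - ∑ j, a j ^ 2| ≤ τ * ∑ j, a j ^ 2 + (1 + τ⁻¹) * ∑ j, (b j - a j) ^ 2 := by
  rw [← sum_sub_distrib, mul_sum, mul_sum, ← sum_add_distrib]
  refine (abs_sum_le_sum_abs _ _).trans (sum_le_sum fun j _ => ?_)
  have hamgm : 2 * |a j * (b j - a j)| ≤ τ * a j ^ 2 + τ⁻¹ * (b j - a j) ^ 2 := by
    rw [abs_mul, ← sq_abs (a j), ← sq_abs (b j - a j)]
    have key : τ * (τ * |a j| ^ 2 + τ⁻¹ * |b j - a j| ^ 2 - 2 * (|a j| * |b j - a j|))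
        = (τ * |a j| - |b j - a j|) ^ 2 := by
      field_simp; ring
    nlinarith [sq_nonneg (τ * |a j| - |b j - a j|)]
  calc |b j ^ 2 - a j ^ 2| = |2 * (a j * (b j - a j)) + (b j - a j) ^ 2| := by ring_nf
    _ ≤ 2 * |a j * (b j - a j)| + (b j - a j) ^ 2 := by
      refine (abs_add_le _ _).trans ?_; rw [abs_mul, abs_two, abs_sq]
    _ ≤ _ := by linarith

lemma sum_sq_bounds_of_sum_sq_sub_le {ι : Type*} [Fintype ι] {ε R : ℝ} {a b : ι → ℝ}
    (hε0 : 0 < ε) (hε : ε < 1 / 2) (hR : 0 ≤ R) (hlo : (1 - ε / 12) * R ≤ ∑ j, a j ^ 2)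
    (hhi : ∑ j, a j ^ 2 ≤ (1 + ε / 12) * R) (hd : ∑ j, (b j - a j) ^ 2 ≤ ε ^ 2 / 1296 * R) :
    (1 - ε / 3) * R ≤ ∑ j, b j ^ 2 ∧ ∑ j, b j ^ 2 ≤ (1 + ε / 3) * R := by
  have hd' : (1 + (ε / 12)⁻¹) * ∑ j, (b j - a j) ^ 2 ≤ ε / 100 * R :=
    calc _ ≤ (1 + (ε / 12)⁻¹) * (ε ^ 2 / 1296 * R) := by gcongr
      _ = (ε + 12) / 1296 * ε * R := by field_simp
      _ ≤ ε / 100 * R := mul_le_mul_of_nonneg_right (by nlinarith) hR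
  have := abs_le.mp (abs_sum_sq_sub_sum_sq_le a b (by positivity : 0 < ε / 12))
  constructor <;> nlinarith

lemma Matrix.PosDef.sum_sq_col_bounds_of_row_perturbation {m ι : Type*} [Fintype m]
    [DecidableEq m] [Fintype ι] {M : Matrix m m ℝ} (hM : M.PosDef) {c ε δ : ℝ} (hε0 : 0 < ε)
    (hε : ε < 1 / 2) {A B : Matrix ι m ℝ} {i : m}
    (hQ : ∀ x, x ⬝ᵥ (M *ᵥ x) ≤ c * ∑ k, x k ^ 2) (hdiag : ∀ k, M⁻¹ k k ≤ 2 * c)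
    (hm : (Fintype.card m : ℝ) ≤ c) (hδ : 2 * c ^ 3 * (1 + ε / 12) * δ ^ 2 ≤ ε ^ 2 / 1296)
    (hlo : (1 - ε / 12) * M⁻¹ i i ≤ ∑ j, A j i ^ 2)
    (hhi : ∀ k, ∑ j, A j k ^ 2 ≤ (1 + ε / 12) * M⁻¹ k k)
    (hrow : ∀ j, √((A j - B j) ⬝ᵥ (M *ᵥ (A j - B j))) ≤ δ * √(A j ⬝ᵥ (M *ᵥ A j))) :
    (1 - ε / 3) * M⁻¹ i i ≤ ∑ j, B j i ^ 2 ∧ ∑ j, B j i ^ 2 ≤ (1 + ε / 3) * M⁻¹ i i := by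
  have hRi : 0 < M⁻¹ i i := hM.inv.diag_pos
  have hε' : 0 ≤ 1 + ε / 12 := by linarith
  have hmass : ∑ k, ∑ j, A j k ^ 2 ≤ c * ((1 + ε / 12) * (2 * c)) :=
    calc _ ≤ ∑ k : m, (1 + ε / 12) * (2 * c) :=
          sum_le_sum fun k _ => (hhi k).trans (mul_le_mul_of_nonneg_left (hdiag k) hε')
      _ = Fintype.card m * ((1 + ε / 12) * (2 * c)) := by rw [sum_const, card_univ, nsmul_eq_mul]
      _ ≤ _ := mul_le_mul_of_nonneg_right hm (mul_nonneg hε' (by linarith [hdiag i]))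
  have hD := hM.sum_sq_sub_apply_le hQ hrow i
  refine sum_sq_bounds_of_sum_sq_sub_le hε0 hε hRi.le hlo (hhi i) (hD.trans ?_)
  nlinarith [mul_le_mul_of_nonneg_left hmass
    (mul_nonneg (mul_nonneg hRi.le (sq_nonneg δ)) (by linarith [hdiag i] : 0 ≤ c)),
    mul_le_mul_of_nonneg_left hδ hRi.le]

lemma sq_mul_le_of_lt_mul_sqrt {n ε δ : ℝ} (hn : 2 ≤ n) (hε : 0 < ε) (hδ0 : 0 ≤ δ)
    (hδ : δ < ε / (72 * n ^ 2) * √(6 * (1 - ε / 12) / ((1 + ε / 12) * (n ^ 2 - 1)))) :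
    2 * n ^ 3 * (1 + ε / 12) * δ ^ 2 ≤ ε ^ 2 / 1296 := by
  set r := 6 * (1 - ε / 12) / ((1 + ε / 12) * (n ^ 2 - 1))
  have hr : 0 ≤ r := by
    by_contra h
    rw [Real.sqrt_eq_zero'.mpr (not_le.mp h).le, mul_zero] at hδ
    linarith
  have hn1 : 0 < n ^ 2 - 1 := by nlinarith
  have hδ2 : δ ^ 2 ≤ (ε / (72 * n ^ 2)) ^ 2 * r := by
    rw [← Real.sq_sqrt hr, ← mul_pow]
    exact pow_le_pow_left₀ hδ0 hδ.le 2
  calc 2 * n ^ 3 * (1 + ε / 12) * δ ^ 2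
      ≤ 2 * n ^ 3 * (1 + ε / 12) * ((ε / (72 * n ^ 2)) ^ 2 * r) := by gcongr
    _ = ε ^ 2 * (1 - ε / 12) / (432 * (n * (n ^ 2 - 1))) := by
      simp only [r]; field_simp; ring
    _ ≤ ε ^ 2 / 1296 := by
      rw [div_le_div_iff₀ (by positivity) (by norm_num)]
      nlinarith [mul_le_mul hn (by nlinarith : (3 : ℝ) ≤ n ^ 2 - 1) (by norm_num) (by linarith)]

theorem stmt13_general {V : Type} [Fintype V] [DecidableEq V]
    (G : SimpleGraph V) [DecidableRel G.Adj] (hconn : G.Connected)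
    (F S1 : Finset V)
    (hS1ne : S1.Nonempty)
    (hFS1 : Disjoint F S1)
    (n : ℕ) (hn : n = Fintype.card V) (hn2 : 2 ≤ n)
    (LF : Matrix F F ℝ)
    (hLF : LF = (G.lapMatrix ℝ).submatrix (fun i : F => (i : V)) (fun i : F => (i : V)))
    (hPD : LF.PosDef)
    (ε : ℝ) (hε0 : 0 < ε) (hε : ε < 1 / 2)
    (t : ℕ)
    (δ : ℝ) (hδ0 : 0 < δ)
    (hδ : δ < ε / (72 * (n : ℝ) ^ 2)
        * Real.sqrt (6 * (1 - ε / 12) / ((1 + ε / 12) * ((n : ℝ) ^ 2 - 1))))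
    {p q : ℕ}
    (X : Matrix (Fin p) F ℝ) (Y : Matrix (Fin q) F ℝ)
    (hXY : ∀ i : F, (∑ a, X a i ^ 2) + (∑ a, Y a i ^ 2)
        = Pi.single i 1 ⬝ᵥ (LF⁻¹ *ᵥ Pi.single i 1))
    (X' Y' Xt Yt : Matrix (Fin t) F ℝ)
    (hX'lo : ∀ i : F, (1 - ε / 12) * ∑ a, X a i ^ 2 ≤ ∑ a, X' a i ^ 2)
    (hX'hi : ∀ i : F, ∑ a, X' a i ^ 2 ≤ (1 + ε / 12) * ∑ a, X a i ^ 2)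
    (hY'lo : ∀ i : F, (1 - ε / 12) * ∑ a, Y a i ^ 2 ≤ ∑ a, Y' a i ^ 2)
    (hY'hi : ∀ i : F, ∑ a, Y' a i ^ 2 ≤ (1 + ε / 12) * ∑ a, Y a i ^ 2)
    (hXrow : ∀ j : Fin t,
        Real.sqrt ((X' j - Xt j) ⬝ᵥ (LF *ᵥ (X' j - Xt j)))
          ≤ δ * Real.sqrt (X' j ⬝ᵥ (LF *ᵥ X' j)))
    (hYrow : ∀ j : Fin t,
        Real.sqrt ((Y' j - Yt j) ⬝ᵥ (LF *ᵥ (Y' j - Yt j)))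
          ≤ δ * Real.sqrt (Y' j ⬝ᵥ (LF *ᵥ Y' j))) :
    ∀ i : F,
      (1 - ε / 3) * (Pi.single i 1 ⬝ᵥ (LF⁻¹ *ᵥ Pi.single i 1))
          ≤ (∑ a, Xt a i ^ 2) + (∑ a, Yt a i ^ 2) ∧
      (∑ a, Xt a i ^ 2) + (∑ a, Yt a i ^ 2)
          ≤ (1 + ε / 3) * (Pi.single i 1 ⬝ᵥ (LF⁻¹ *ᵥ Pi.single i 1)) := by
  obtain ⟨s, hs⟩ := hS1ne
  subst hn
  simp only [single_dotProduct, one_mul, mulVec_single_one_apply] at hXY ⊢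
  intro i
  have hcol (A B : Matrix (Fin t) F ℝ) (k : F) :
      ∑ j, fromRows A B j k ^ 2 = ∑ a, A a k ^ 2 + ∑ a, B a k ^ 2 := by
    simp only [Fintype.sum_sum_type, fromRows_apply_inl, fromRows_apply_inr]
  have := hPD.sum_sq_col_bounds_of_row_perturbation hε0 hε
    (A := fromRows X' Y') (B := fromRows Xt Yt)
    (fun x => hLF ▸ SimpleGraph.dotProduct_lapMatrix_submatrix_mulVec_le x)
    (fun k => hPD.inv_apply_le_of_forall_sq_apply_le fun x =>
      hLF ▸ hconn.sq_apply_le_lapMatrix_submatrix (disjoint_right.mp hFS1 hs) x k)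
    (by rw [Fintype.card_coe]; exact_mod_cast F.card_le_univ)
    (sq_mul_le_of_lt_mul_sqrt (by exact_mod_cast hn2) hε0 hδ0.le hδ)
    (by rw [hcol, ← hXY i]; linarith [hX'lo i, hY'lo i])
    (fun k => by rw [hcol, ← hXY k]; linarith [hX'hi k, hY'hi k])
    (by rintro (j | j); exacts [hXrow j, hYrow j])
  rwa [hcol] at this

/-- Under the grounded Laplacian setup with `n ≥ 2`, given `0 < ε < 1/2`, a positive
integer `t`, and `0 < δ < (ε/(72n²))·√(6(1−ε/12)/((1+ε/12)(n²−1)))`, let `X, Y` be real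
matrices with columns indexed by `F` such that `‖X eᵢ‖² + ‖Y eᵢ‖² = eᵢᵀ L_F⁻¹ eᵢ` for every
`i ∈ F`, and let `X', Y', X̃, Ỹ` be real `t × |F|` matrices satisfying the column-norm
approximation conditions (i) and the row-wise `L_F`-norm conditions (ii).  Then for every
`i ∈ F`: `(1 − ε/3)·eᵢᵀ L_F⁻¹ eᵢ ≤ ‖X̃ eᵢ‖² + ‖Ỹ eᵢ‖² ≤ (1 + ε/3)·eᵢᵀ L_F⁻¹ eᵢ`. -/
theorem stmt13 {V : Type} [Fintype V] [DecidableEq V]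
    (G : SimpleGraph V) [DecidableRel G.Adj] (hconn : G.Connected)
    (F S0 S1 : Finset V)
    (hFne : F.Nonempty) (hS1ne : S1.Nonempty)
    (hFS0 : Disjoint F S0) (hFS1 : Disjoint F S1) (hS0S1 : Disjoint S0 S1)
    (hcover : F ∪ S0 ∪ S1 = Finset.univ)
    (n : ℕ) (hn : n = Fintype.card V) (hn2 : 2 ≤ n)
    (LF : Matrix F F ℝ)
    (hLF : LF = (G.lapMatrix ℝ).submatrix (fun i : F => (i : V)) (fun i : F => (i : V)))
    (hPD : LF.PosDef)
    (ε : ℝ) (hε0 : 0 < ε) (hε : ε < 1 / 2)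
    (t : ℕ) (ht : 0 < t)
    (δ : ℝ) (hδ0 : 0 < δ)
    (hδ : δ < ε / (72 * (n : ℝ) ^ 2)
        * Real.sqrt (6 * (1 - ε / 12) / ((1 + ε / 12) * ((n : ℝ) ^ 2 - 1))))
    {p q : ℕ}
    (X : Matrix (Fin p) F ℝ) (Y : Matrix (Fin q) F ℝ)
    (hXY : ∀ i : F, (∑ a, X a i ^ 2) + (∑ a, Y a i ^ 2)
        = Pi.single i 1 ⬝ᵥ (LF⁻¹ *ᵥ Pi.single i 1))
    (X' Y' Xt Yt : Matrix (Fin t) F ℝ)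
    (hX'lo : ∀ i : F, (1 - ε / 12) * ∑ a, X a i ^ 2 ≤ ∑ a, X' a i ^ 2)
    (hX'hi : ∀ i : F, ∑ a, X' a i ^ 2 ≤ (1 + ε / 12) * ∑ a, X a i ^ 2)
    (hY'lo : ∀ i : F, (1 - ε / 12) * ∑ a, Y a i ^ 2 ≤ ∑ a, Y' a i ^ 2)
    (hY'hi : ∀ i : F, ∑ a, Y' a i ^ 2 ≤ (1 + ε / 12) * ∑ a, Y a i ^ 2)
    (hXrow : ∀ j : Fin t,
        Real.sqrt ((X' j - Xt j) ⬝ᵥ (LF *ᵥ (X' j - Xt j)))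
          ≤ δ * Real.sqrt (X' j ⬝ᵥ (LF *ᵥ X' j)))
    (hYrow : ∀ j : Fin t,
        Real.sqrt ((Y' j - Yt j) ⬝ᵥ (LF *ᵥ (Y' j - Yt j)))
          ≤ δ * Real.sqrt (Y' j ⬝ᵥ (LF *ᵥ Y' j))) :
    ∀ i : F,
      (1 - ε / 3) * (Pi.single i 1 ⬝ᵥ (LF⁻¹ *ᵥ Pi.single i 1))
          ≤ (∑ a, Xt a i ^ 2) + (∑ a, Yt a i ^ 2) ∧
      (∑ a, Xt a i ^ 2) + (∑ a, Yt a i ^ 2)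
          ≤ (1 + ε / 3) * (Pi.single i 1 ⬝ᵥ (LF⁻¹ *ᵥ Pi.single i 1)) :=
  stmt13_general G hconn F S1 hS1ne hFS1 n hn hn2 LF hLF hPD ε hε0 hε t δ hδ0 hδ X Y hXY X' Y' Xt Yt
    hX'lo hX'hi hY'lo hY'hi hXrow hYrow
end
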